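/- Let D be a tournament missing disjoint paths of length 2 and let C = a_1b_1c_1, …, a_kb_kc_k be a double cycle in Δ(D). Then K(C) is an interval of D: for all u, v ∈ K(C), N⁺(u) ∖ K(C) = N⁺(v) ∖ K(C) and N⁻(u) ∖ K(C) = N⁻(v) ∖ K(C). -/

import Mathlib

namespace SSNC

variable {V : Type*}

/-- The arc relation of an oriented graph: no digons (hence irreflexive). -/
def Oriented (A : V → V → Prop) : Prop := ∀ u v, A u v → ¬ A v u

/-- `u ∈ N⁺⁺(v)`: the second out-neighborhood. -/
def SecondOut (A : V → V → Prop) (v u : V) : Prop :=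
  u ≠ v ∧ ¬ A v u ∧ ∃ w, A v w ∧ A w u

/-- `{u, v}` is a missing edge of the digraph. -/
def IsMissing (A : V → V → Prop) (u v : V) : Prop :=
  u ≠ v ∧ ¬ A u v ∧ ¬ A v u

/-- The losing relation for a fixed labeling of the two pairs: `a→x`, `b→y`,
`y ∉ N⁺(a) ∪ N⁺⁺(a)` and `x ∉ N⁺(b) ∪ N⁺⁺(b)`. -/
def LosesOrd (A : V → V → Prop) (a b x y : V) : Prop :=
  A a x ∧ A b y ∧ ¬ A a y ∧ ¬ SecondOut A a y ∧ ¬ A b x ∧ ¬ SecondOut A b x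

/-- The missing edge `{a,b}` loses to the missing edge `{x,y}` (for some labeling). -/
def Loses (A : V → V → Prop) (a b x y : V) : Prop :=
  LosesOrd A a b x y ∨ LosesOrd A a b y x

/-- Degree of a vertex in the missing graph. -/
noncomputable def mdeg (A : V → V → Prop) (v : V) : ℕ :=
  ({w | IsMissing A v w} : Set V).ncard

/-- The missing graph, as a simple graph. -/
def missingGraph (A : V → V → Prop) : SimpleGraph V where
  Adj u v := IsMissing A u v
  symm := by
    constructor
    rintro u v ⟨h1, h2, h3⟩
    exact ⟨h1.symm, h3, h2⟩
  loopless := by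
    constructor
    rintro v ⟨h1, -, -⟩
    exact h1 rfl

/-- The missing graph is a vertex-disjoint union of paths
(equivalently: acyclic with maximum degree at most 2). -/
def MissingDisjointPaths (A : V → V → Prop) : Prop :=
  (missingGraph A).IsAcyclic ∧ ∀ v, mdeg A v ≤ 2

/-- The missing graph is a vertex-disjoint union of paths on exactly 3 vertices
(equivalently: every missing edge has one endpoint of missing-degree 1 and one of
missing-degree 2). -/
def MissingPaths2 (A : V → V → Prop) : Prop :=
  ∀ u v, IsMissing A u v →
    (mdeg A u = 1 ∧ mdeg A v = 2) ∨ (mdeg A u = 2 ∧ mdeg A v = 1)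

/-- The missing graph is a vertex-disjoint union of paths on 2 or 3 vertices. -/
def MissingPathsLe2 (A : V → V → Prop) : Prop :=
  ∀ u v, IsMissing A u v →
    (mdeg A u = 1 ∧ mdeg A v = 1) ∨ (mdeg A u = 1 ∧ mdeg A v = 2) ∨
    (mdeg A u = 2 ∧ mdeg A v = 1)

/-- Out-degree of the missing edge `{u,v}` in the dependency digraph `Δ(D)`:
the number of missing edges it loses to. -/
noncomputable def outDegDelta (A : V → V → Prop) (u v : V) : ℕ :=
  ({f : Sym2 V | ∃ x y, f = s(x, y) ∧ IsMissing A x y ∧ Loses A u v x y}).ncard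

/-- In-degree of the missing edge `{u,v}` in the dependency digraph `Δ(D)`:
the number of missing edges losing to it. -/
noncomputable def inDegDelta (A : V → V → Prop) (u v : V) : ℕ :=
  ({f : Sym2 V | ∃ x y, f = s(x, y) ∧ IsMissing A x y ∧ Loses A x y u v}).ncard

/-- `C = a₁b₁c₁, …, a_k b_k c_k` is a double cycle in `Δ(D)`: pairwise vertex-disjoint
missing paths of length 2 (`k ≥ 2`), where each of `{aᵢ,bᵢ}, {bᵢ,cᵢ}` loses to each of
`{aᵢ₊₁,bᵢ₊₁}, {bᵢ₊₁,cᵢ₊₁}` (indices modulo `k`). -/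
def IsDoubleCycle (A : V → V → Prop) (k : ℕ) (a b c : ZMod k → V) : Prop :=
  2 ≤ k ∧
  (∀ i, IsMissing A (a i) (b i) ∧ IsMissing A (b i) (c i) ∧ a i ≠ c i) ∧
  (∀ i j, i ≠ j → Disjoint ({a i, b i, c i} : Set V) {a j, b j, c j}) ∧
  (∀ i, Loses A (a i) (b i) (a (i + 1)) (b (i + 1)) ∧
        Loses A (a i) (b i) (b (i + 1)) (c (i + 1)) ∧
        Loses A (b i) (c i) (a (i + 1)) (b (i + 1)) ∧
        Loses A (b i) (c i) (b (i + 1)) (c (i + 1)))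

/-- `K(C)` for a double cycle `C`. -/
def Kset {k : ℕ} (a b c : ZMod k → V) : Set V :=
  {v | ∃ i, v = a i ∨ v = b i ∨ v = c i}

/-- Out-neighborhood in the subdigraph induced on `K`. -/
def outIn (A : V → V → Prop) (K : Set V) (v : V) : Set V := {u | u ∈ K ∧ A v u}

/-- In-neighborhood in the subdigraph induced on `K`. -/
def inIn (A : V → V → Prop) (K : Set V) (v : V) : Set V := {u | u ∈ K ∧ A u v}

/-- Second out-neighborhood in the subdigraph induced on `K`. -/
def secondOutIn (A : V → V → Prop) (K : Set V) (v : V) : Set V :=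
  {u | u ∈ K ∧ u ≠ v ∧ ¬ A v u ∧ ∃ w ∈ K, A v w ∧ A w u}

/-- Second in-neighborhood in the subdigraph induced on `K`. -/
def secondInIn (A : V → V → Prop) (K : Set V) (v : V) : Set V :=
  {u | u ∈ K ∧ u ≠ v ∧ ¬ A u v ∧ ∃ w ∈ K, A u w ∧ A w v}

/-! Fix `w ∉ K(C)`; by the missing-degree conditions `w` is adjacent to every vertex of `K(C)`.
If `{u, v}` loses to `{x, y}` with `u → x`, `v → y`, then `u → w` forces `y → w`, since
otherwise `y ∈ N⁺⁺(u)` through `w`. Along the cycle of losing edges `{aᵢ, bᵢ}` this propagates both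
"some endpoint sends an arc to `w`" and "both endpoints do", so either every vertex of `K(C)`
sends an arc to `w`, or none does, or every `{aᵢ, bᵢ}` has exactly one such endpoint `sᵢ`.
In the last case `sᵢ₊₁ ∉ N⁺(sᵢ) ∪ N⁺⁺(sᵢ)` for all `i`, which forces `s_{i+n} → sᵢ` for every
`0 < n < k`; for `n = k - 1` this contradicts `s₁ → s₀`. -/

theorem ZMod.forall_of_succ {k : ℕ} [NeZero k] {P : ZMod k → Prop}
    (hsucc : ∀ i, P i → P (i + 1)) {i : ZMod k} (hi : P i) (j : ZMod k) : P j := by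
  have hadd : ∀ n : ℕ, P (i + n) := by
    intro n
    induction n with
    | zero => simpa using hi
    | succ n ih => simpa [add_assoc] using hsucc _ ih
  simpa using hadd (j - i).val

theorem ZMod.add_natCast_ne_self {k n : ℕ} (hn : 0 < n) (hnk : n < k) (i : ZMod k) :
    i + n ≠ i := by
  rw [Ne, add_eq_left, ZMod.natCast_eq_zero_iff]
  exact fun h => (Nat.le_of_dvd hn h).not_gt hnk

theorem IsMissing.symm {A : V → V → Prop} {u v : V} (h : IsMissing A u v) : IsMissing A v u :=
  ⟨h.1.symm, h.2.2, h.2.1⟩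

theorem Oriented.arc_iff_not_arc {A : V → V → Prop} (hA : Oriented A) {u v : V}
    (huv : A u v ∨ A v u) : A v u ↔ ¬ A u v :=
  ⟨hA v u, huv.resolve_left⟩

section MissingPaths

variable {A : V → V → Prop} (hP : MissingPaths2 A)
include hP

theorem MissingPaths2.finite_setOf_isMissing (v : V) : {w | IsMissing A v w}.Finite := by
  by_cases h : ∃ w, IsMissing A v w
  · obtain ⟨w, hw⟩ := h
    apply Set.finite_of_ncard_ne_zero
    rcases hP v w hw with ⟨h, -⟩ | ⟨h, -⟩ <;> rw [mdeg] at h <;> omega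
  · simp only [not_exists] at h
    simp [h]

variable {a b c : V} (hab : IsMissing A a b) (hbc : IsMissing A b c) (hac : a ≠ c)
include hab hbc hac

theorem MissingPaths2.mdeg_center : mdeg A b = 2 := by
  have hsub : ({a, c} : Set V) ⊆ {w | IsMissing A b w} := by
    rintro z (rfl | rfl)
    exacts [hab.symm, hbc]
  have hle : 2 ≤ mdeg A b := by
    rw [mdeg, ← Set.ncard_pair hac]
    exact Set.ncard_le_ncard hsub (hP.finite_setOf_isMissing b)
  rcases hP a b hab with h | h <;> omega

theorem MissingPaths2.mdeg_end : mdeg A a = 1 := by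
  have := hP.mdeg_center hab hbc hac
  rcases hP a b hab with h | h <;> omega

theorem MissingPaths2.setOf_isMissing_center : {w | IsMissing A b w} = {a, c} := by
  refine (Set.eq_of_subset_of_ncard_le ?_ ?_ (hP.finite_setOf_isMissing b)).symm
  · rintro z (rfl | rfl)
    exacts [hab.symm, hbc]
  · rw [Set.ncard_pair hac]
    exact (hP.mdeg_center hab hbc hac).le

theorem MissingPaths2.setOf_isMissing_end : {w | IsMissing A a w} = {b} := by
  refine (Set.eq_of_subset_of_ncard_le (t := {w | IsMissing A a w})
    (Set.singleton_subset_iff.mpr hab) ?_ (hP.finite_setOf_isMissing a)).symm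
  rw [Set.ncard_singleton]
  exact (hP.mdeg_end hab hbc hac).le

theorem MissingPaths2.mem_of_isMissing {p z : V} (hp : p ∈ ({a, b, c} : Set V))
    (hpz : IsMissing A p z) : z ∈ ({a, b, c} : Set V) := by
  have hc := hP.setOf_isMissing_end hbc.symm hab.symm hac.symm
  have hb := hP.setOf_isMissing_center hab hbc hac
  have ha := hP.setOf_isMissing_end hab hbc hac
  rcases hp with rfl | rfl | rfl
  · have hz : z ∈ ({b} : Set V) := ha ▸ hpz
    simp_all
  · have hz : z ∈ ({a, c} : Set V) := hb ▸ hpz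
    rcases hz with rfl | rfl <;> simp
  · have hz : z ∈ ({b} : Set V) := hc ▸ hpz
    simp_all

theorem MissingPaths2.adj_of_mem_of_not_mem {p z : V} (hp : p ∈ ({a, b, c} : Set V))
    (hz : z ∉ ({a, b, c} : Set V)) : A p z ∨ A z p := by
  by_contra h
  rw [not_or] at h
  have hpz : p ≠ z := by rintro rfl; exact hz hp
  exact hz (hP.mem_of_isMissing hab hbc hac hp ⟨hpz, h.1, h.2⟩)

end MissingPaths

section Losing

variable {A : V → V → Prop} {u v x y w : V}

theorem LosesOrd.swap (h : LosesOrd A u v x y) : LosesOrd A v u y x :=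
  ⟨h.2.1, h.1, h.2.2.2.2.1, h.2.2.2.2.2, h.2.2.1, h.2.2.2.1⟩

theorem Loses.swap_left (h : Loses A u v x y) : Loses A v u x y :=
  h.elim (fun h => Or.inr h.swap) (fun h => Or.inl h.swap)

theorem Loses.swap_right (h : Loses A u v x y) : Loses A u v y x :=
  h.symm

theorem LosesOrd.arc_of_arc (hA : Oriented A) (h : LosesOrd A u v x y)
    (hyw : A y w ∨ A w y) (huw : A u w) : A y w := by
  refine hyw.resolve_right fun hwy => ?_
  by_cases hyu : y = u
  · subst hyu
    exact hA _ _ huw hwy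
  · exact h.2.2.2.1 ⟨hyu, h.2.2.1, w, huw, hwy⟩

variable (hA : Oriented A) (h : Loses A u v x y) (hxw : A x w ∨ A w x) (hyw : A y w ∨ A w y)
include hA h hxw hyw

theorem Loses.arc_or_arc_of_arc_or_arc (huvw : A u w ∨ A v w) : A x w ∨ A y w := by
  rcases h with h | h <;> rcases huvw with huw | hvw
  exacts [Or.inr (h.arc_of_arc hA hyw huw), Or.inl (h.swap.arc_of_arc hA hxw hvw),
    Or.inl (h.arc_of_arc hA hxw huw), Or.inr (h.swap.arc_of_arc hA hyw hvw)]

theorem Loses.arc_and_arc_of_arc_and_arc (huw : A u w) (hvw : A v w) : A x w ∧ A y w := by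
  rcases h with h | h
  exacts [⟨h.swap.arc_of_arc hA hxw hvw, h.arc_of_arc hA hyw huw⟩,
    ⟨h.arc_of_arc hA hxw huw, h.swap.arc_of_arc hA hyw hvw⟩]

omit hyw in
theorem Loses.far_of_arc (huw : A u w) (hx : ¬ A x w) : ¬ A u y ∧ ¬ SecondOut A u y := by
  rcases h with h | h
  · exact ⟨h.2.2.1, h.2.2.2.1⟩
  · exact absurd (h.arc_of_arc hA hxw huw) hx

end Losing

theorem false_of_far_succ {A : V → V → Prop} (hA : Oriented A) {k : ℕ} (hk : 2 ≤ k)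
    (s : ZMod k → V) (hadj : ∀ i j, i ≠ j → A (s i) (s j) ∨ A (s j) (s i))
    (hfar : ∀ i, ¬ A (s i) (s (i + 1)) ∧ ¬ SecondOut A (s i) (s (i + 1))) : False := by
  have hstep : ∀ i, A (s (i + 1)) (s i) := fun i =>
    (hadj _ _ (by simpa using ZMod.add_natCast_ne_self one_pos hk i)).resolve_right (hfar i).1
  have hback : ∀ n : ℕ, n + 1 < k → ∀ i, A (s (i + n + 1)) (s i) := by
    intro n
    induction n with
    | zero => simpa using fun _ => hstep
    | succ n ih =>
      intro hnk i
      have hcast : i + 1 + n + 1 = i + ((n + 1 : ℕ) : ZMod k) + 1 := by push_cast; ring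
      have hne : i + ((n + 1 : ℕ) : ZMod k) + 1 ≠ i := by
        rw [show i + ((n + 1 : ℕ) : ZMod k) + 1 = i + ((n + 2 : ℕ) : ZMod k) by push_cast; ring]
        exact ZMod.add_natCast_ne_self (by omega) hnk i
      refine (hadj _ _ hne).resolve_right fun hto => (hfar i).2 ⟨?_, (hfar i).1, _, hto, ?_⟩
      · intro heq
        have hloop := hstep i
        rw [heq] at hloop
        exact hA _ _ hloop hloop
      · simpa [hcast] using ih (by omega) (i + 1)
  have hwrap : (1 : ZMod k) + (k - 2 : ℕ) + 1 = 0 := by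
    have h : ((k - 2 + 2 : ℕ) : ZMod k) = 0 := by rw [Nat.sub_add_cancel hk, ZMod.natCast_self]
    push_cast at h
    linear_combination h
  have hlast := hback (k - 2) (by omega) 1
  rw [hwrap] at hlast
  exact (hfar 0).1 (by simpa using hlast)

section DoubleCycle

variable {A : V → V → Prop} {k : ℕ} {a b c : ZMod k → V}

theorem IsDoubleCycle.adj_of_mem_of_not_mem (hP : MissingPaths2 A)
    (hC : IsDoubleCycle A k a b c) {i : ZMod k} {p z : V} (hp : p ∈ ({a i, b i, c i} : Set V))
    (hz : z ∉ ({a i, b i, c i} : Set V)) : A p z ∨ A z p :=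
  hP.adj_of_mem_of_not_mem (hC.2.1 i).1 (hC.2.1 i).2.1 (hC.2.1 i).2.2 hp hz

theorem IsDoubleCycle.adj_of_mem_Kset_of_not_mem (hP : MissingPaths2 A)
    (hC : IsDoubleCycle A k a b c) {p z : V} (hp : p ∈ Kset a b c) (hz : z ∉ Kset a b c) :
    A p z ∨ A z p :=
  let ⟨i, hi⟩ := hp
  hC.adj_of_mem_of_not_mem hP hi fun hz' => hz ⟨i, hz'⟩

theorem IsDoubleCycle.adj_of_ne (hP : MissingPaths2 A) (hC : IsDoubleCycle A k a b c)
    {i j : ZMod k} (hij : i ≠ j) {p q : V} (hp : p ∈ ({a i, b i, c i} : Set V))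
    (hq : q ∈ ({a j, b j, c j} : Set V)) : A p q ∨ A q p :=
  hC.adj_of_mem_of_not_mem hP hp (Set.disjoint_right.mp (hC.2.2.1 i j hij) hq)

variable (hA : Oriented A) (hP : MissingPaths2 A) (hC : IsDoubleCycle A k a b c) {w : V}
  (hw : w ∉ Kset a b c)
include hP hC hw

theorem IsDoubleCycle.adj_of_not_mem_Kset (i : ZMod k) {p : V}
    (hp : p ∈ ({a i, b i, c i} : Set V)) : A p w ∨ A w p :=
  hC.adj_of_mem_of_not_mem hP hp fun hw' => hw ⟨i, hw'⟩

include hA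

theorem IsDoubleCycle.arc_or_arc_succ (i : ZMod k) (h : A (a i) w ∨ A (b i) w) :
    A (a (i + 1)) w ∨ A (b (i + 1)) w :=
  (hC.2.2.2 i).1.arc_or_arc_of_arc_or_arc hA (hC.adj_of_not_mem_Kset hP hw (i + 1) (by simp))
    (hC.adj_of_not_mem_Kset hP hw (i + 1) (by simp)) h

theorem IsDoubleCycle.arc_and_arc_succ (i : ZMod k) (h : A (a i) w ∧ A (b i) w) :
    A (a (i + 1)) w ∧ A (b (i + 1)) w :=
  (hC.2.2.2 i).1.arc_and_arc_of_arc_and_arc hA (hC.adj_of_not_mem_Kset hP hw (i + 1) (by simp))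
    (hC.adj_of_not_mem_Kset hP hw (i + 1) (by simp)) h.1 h.2

theorem IsDoubleCycle.arc_of_arc_and_arc {i₀ : ZMod k} (h₀ : A (a i₀) w ∧ A (b i₀) w) :
    ∀ p ∈ Kset a b c, A p w := by
  have : NeZero k := ⟨by have := hC.1; omega⟩
  have hall := ZMod.forall_of_succ (hC.arc_and_arc_succ hA hP hw) h₀
  rintro p ⟨i, rfl | rfl | rfl⟩
  · exact (hall i).1
  · exact (hall i).2
  · have hloss : Loses A (a (i - 1)) (b (i - 1)) (b i) (c i) := by
      simpa using (hC.2.2.2 (i - 1)).2.1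
    exact (hloss.arc_and_arc_of_arc_and_arc hA (hC.adj_of_not_mem_Kset hP hw i (by simp))
      (hC.adj_of_not_mem_Kset hP hw i (by simp)) (hall _).1 (hall _).2).2

theorem IsDoubleCycle.not_arc_of_not_arc_or_arc (h : ∀ i, ¬ (A (a i) w ∨ A (b i) w)) :
    ∀ p ∈ Kset a b c, ¬ A p w := by
  rintro p ⟨i, rfl | rfl | rfl⟩ hpw
  · exact h i (Or.inl hpw)
  · exact h i (Or.inr hpw)
  · have hloss : Loses A (b i) (c i) (a (i + 1)) (b (i + 1)) := (hC.2.2.2 i).2.2.1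
    exact h (i + 1) (hloss.arc_or_arc_of_arc_or_arc hA
      (hC.adj_of_not_mem_Kset hP hw (i + 1) (by simp))
      (hC.adj_of_not_mem_Kset hP hw (i + 1) (by simp)) (Or.inr hpw))

theorem IsDoubleCycle.false_of_xor_arc
    (hxor : ∀ i, (A (a i) w ∨ A (b i) w) ∧ ¬ (A (a i) w ∧ A (b i) w)) : False := by
  classical
  let s : ZMod k → V := fun i => if A (a i) w then a i else b i
  let t : ZMod k → V := fun i => if A (a i) w then b i else a i
  have hs_mem : ∀ i, s i ∈ ({a i, b i, c i} : Set V) := fun i => by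
    dsimp only [s]; split_ifs <;> simp
  have ht_mem : ∀ i, t i ∈ ({a i, b i, c i} : Set V) := fun i => by
    dsimp only [t]; split_ifs <;> simp
  have hs : ∀ i, A (s i) w := fun i => by
    dsimp only [s]; split_ifs with h
    exacts [h, (hxor i).1.resolve_left h]
  have ht : ∀ i, ¬ A (t i) w := fun i => by
    dsimp only [t]; split_ifs with h
    exacts [fun hb => (hxor i).2 ⟨h, hb⟩, h]
  have hloss : ∀ i, Loses A (s i) (t i) (t (i + 1)) (s (i + 1)) := fun i => by
    have l := (hC.2.2.2 i).1
    dsimp only [s, t]; split_ifs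
    exacts [l.swap_right, l, l.swap_left.swap_right, l.swap_left]
  exact false_of_far_succ hA hC.1 s (fun i j hij => hC.adj_of_ne hP hij (hs_mem i) (hs_mem j))
    fun i => (hloss i).far_of_arc hA (hC.adj_of_not_mem_Kset hP hw _ (ht_mem (i + 1)))
      (hs i) (ht (i + 1))

theorem IsDoubleCycle.arc_all_or_none :
    (∀ p ∈ Kset a b c, A p w) ∨ ∀ p ∈ Kset a b c, ¬ A p w := by
  by_cases hboth : ∃ i, A (a i) w ∧ A (b i) w
  · obtain ⟨i₀, h₀⟩ := hboth
    exact Or.inl (hC.arc_of_arc_and_arc hA hP hw h₀)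
  by_cases hsome : ∃ i, A (a i) w ∨ A (b i) w
  · have : NeZero k := ⟨by have := hC.1; omega⟩
    obtain ⟨i₀, h₀⟩ := hsome
    exact (hC.false_of_xor_arc hA hP hw fun i =>
      ⟨ZMod.forall_of_succ (hC.arc_or_arc_succ hA hP hw) h₀ i, fun h => hboth ⟨i, h⟩⟩).elim
  · exact Or.inr (hC.not_arc_of_not_arc_or_arc hA hP hw fun i h => hsome ⟨i, h⟩)

theorem IsDoubleCycle.arc_iff_arc {p q : V} (hp : p ∈ Kset a b c) (hq : q ∈ Kset a b c) :
    A p w ↔ A q w :=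
  (hC.arc_all_or_none hA hP hw).elim (fun h => iff_of_true (h p hp) (h q hq))
    fun h => iff_of_false (h p hp) (h q hq)

end DoubleCycle

theorem stmt15_general {V : Type*} (A : V → V → Prop) (hA : Oriented A)
    (hP : MissingPaths2 A) (k : ℕ) (a b c : ZMod k → V)
    (hC : IsDoubleCycle A k a b c) (K : Set V) (hK : K = Kset a b c) :
    ∀ u ∈ K, ∀ v ∈ K,
      ({w | A u w} : Set V) \ K = ({w | A v w} : Set V) \ K ∧
      ({w | A w u} : Set V) \ K = ({w | A w v} : Set V) \ K := by
  subst hK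
  intro u hu v hv
  have hout : ∀ z ∉ Kset a b c, A u z ↔ A v z := fun z hz => hC.arc_iff_arc hA hP hz hu hv
  refine ⟨Set.ext fun z => and_congr_left (hout z),
    Set.ext fun z => and_congr_left fun hz => ?_⟩
  change A z u ↔ A z v
  rw [hA.arc_iff_not_arc (hC.adj_of_mem_Kset_of_not_mem hP hu hz),
    hA.arc_iff_not_arc (hC.adj_of_mem_Kset_of_not_mem hP hv hz), hout z hz]

/-- Proposition 4.17: `K(C)` is an interval of `D` for any double cycle `C`. -/
theorem stmt15 {V : Type*} [Fintype V] (A : V → V → Prop) (hA : Oriented A)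
    (hP : MissingPaths2 A) (k : ℕ) (a b c : ZMod k → V)
    (hC : IsDoubleCycle A k a b c) (K : Set V) (hK : K = Kset a b c) :
    ∀ u ∈ K, ∀ v ∈ K,
      ({w | A u w} : Set V) \ K = ({w | A v w} : Set V) \ K ∧
      ({w | A w u} : Set V) \ K = ({w | A w v} : Set V) \ K :=
  stmt15_general A hA hP k a b c hC K hK

end SSNC
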